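/- Let (X,d) be a compact metric space and ε > 0. Then Widim_ε(X,d) ≤ dim(X), and the topological dimension of X satisfies dim(X) = lim_{ε→0} Widim_ε(X,d), with the limit independent of the choice of metric d inducing the topology of X. -/
import Mathlib


/-- `P` has Lebesgue covering dimension at most `m`: every open cover admits an open
refinement covering `P` of order at most `m + 1`. -/
def dimLE (P : Type) [TopologicalSpace P] (m : ℕ) : Prop :=
  ∀ 𝒰 : Set (Set P), (∀ U ∈ 𝒰, IsOpen U) → ⋃₀ 𝒰 = Set.univ →
    ∃ 𝒱 : Set (Set P), (∀ V ∈ 𝒱, IsOpen V) ∧ ⋃₀ 𝒱 = Set.univ ∧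
      (∀ V ∈ 𝒱, ∃ U ∈ 𝒰, V ⊆ U) ∧
      ∀ x : P, {V ∈ 𝒱 | x ∈ V}.Finite ∧ {V ∈ 𝒱 | x ∈ V}.ncard ≤ m + 1

/-- The Lebesgue covering (topological) dimension of `P`, valued in `ℕ∞`. -/
noncomputable def covDim (P : Type) [TopologicalSpace P] : ℕ∞ :=
  sInf ((fun m : ℕ => (m : ℕ∞)) '' {m : ℕ | dimLE P m})

/-- The `ε`-width dimension `Widim_ε(X, ρ)`. -/
noncomputable def widim (X : Type) [TopologicalSpace X] (ρ : X → X → ℝ) (ε : ℝ) : ℕ∞ :=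
  sInf {n : ℕ∞ | ∃ (P : Type) (_ : TopologicalSpace P) (_ : CompactSpace P)
    (_ : TopologicalSpace.MetrizableSpace P) (f : X → P),
      Continuous f ∧ (∀ x y, f x = f y → ρ x y ≤ ε) ∧ covDim P = n}

/-- `d` is a metric on `X` compatible with the topology `t`. -/
def IsCompatMetric (X : Type) [t : TopologicalSpace X] (d : X → X → ℝ) : Prop :=
  ∃ m : MetricSpace X,
    @UniformSpace.toTopologicalSpace X
        (@PseudoMetricSpace.toUniformSpace X m.toPseudoMetricSpace) = t ∧
    ∀ x y, @dist X (@PseudoMetricSpace.toDist X m.toPseudoMetricSpace) x y = d x y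

lemma dimLE_mono {P : Type} [TopologicalSpace P] {m n : ℕ} (h : m ≤ n) (hm : dimLE P m) :
    dimLE P n := by
  intro 𝒰 hU hcov
  obtain ⟨𝒱, h1, h2, h3, h4⟩ := hm 𝒰 hU hcov
  exact ⟨𝒱, h1, h2, h3, fun x => ⟨(h4 x).1, (h4 x).2.trans (by omega)⟩⟩

lemma exists_le_of_sInf_le {S : Set ℕ∞} {N : ℕ} (h : sInf S ≤ N) : ∃ a ∈ S, a ≤ (N : ℕ∞) := by
  by_contra hc
  push_neg at hc
  have h2 : (N : ℕ∞) + 1 ≤ sInf S :=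
    le_sInf fun a ha => (ENat.add_one_le_iff (by simp)).mpr (hc a ha)
  have : (N : ℕ∞) + 1 ≤ N := h2.trans h
  simp [ENat.add_one_le_iff] at this

lemma dimLE_of_covDim_le {P : Type} [TopologicalSpace P] {N : ℕ} (h : covDim P ≤ N) :
    dimLE P N := by
  obtain ⟨a, ⟨n, hn, rfl⟩, hle⟩ := exists_le_of_sInf_le h
  have : n ≤ N := by simpa using hle
  exact dimLE_mono this hn

/-- Key lemma: if arbitrarily fine `ε`-embeddings into spaces of dimension `≤ N` exist,
then `X` itself has covering dimension `≤ N`. -/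
lemma dimLE_of_fine_embeddings {X : Type} [t : TopologicalSpace X] [CompactSpace X]
    (d : X → X → ℝ) (hd : IsCompatMetric X d) (N : ℕ)
    (h : ∀ ε : ℝ, 0 < ε → ∃ (P : Type) (_ : TopologicalSpace P) (_ : CompactSpace P)
      (_ : TopologicalSpace.MetrizableSpace P) (f : X → P),
        Continuous f ∧ (∀ x y, f x = f y → d x y ≤ ε) ∧ dimLE P N) :
    dimLE X N := by
  obtain ⟨m, hm, hdist⟩ := hd
  subst hm
  letI : MetricSpace X := m
  intro 𝒰 hUopen hUcov
  rcases isEmpty_or_nonempty X with hX | hX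
  · refine ⟨∅, by simp, ?_, by simp, by simp⟩
    rw [Set.sUnion_empty, eq_comm, Set.univ_eq_empty_iff]
    exact hX
  · obtain ⟨δ, hδ, hleb⟩ := lebesgue_number_lemma_of_metric_sUnion isCompact_univ hUopen
      (by rw [hUcov])
    obtain ⟨P, _, _, _, f, hf, hfib, hP⟩ := h (δ / 2) (by linarith)
    have hfiber : ∀ p : P, ∃ U ∈ 𝒰, f ⁻¹' {p} ⊆ U := by
      intro p
      rcases (f ⁻¹' {p}).eq_empty_or_nonempty with he | ⟨x, hx⟩
      · obtain ⟨x⟩ := hX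
        obtain ⟨U, hU, _⟩ := hleb x (Set.mem_univ x)
        exact ⟨U, hU, he ▸ Set.empty_subset _⟩
      · obtain ⟨U, hU, hball⟩ := hleb x (Set.mem_univ x)
        refine ⟨U, hU, fun y hy => hball ?_⟩
        have : d x y ≤ δ / 2 := hfib x y (by rw [hx, hy])
        rw [Metric.mem_ball, dist_comm]
        rw [hdist] at *
        linarith
    choose U hU hUfib using hfiber
    have hclosed : IsClosedMap f := hf.isClosedMap
    set W : P → Set P := fun p => (f '' (U p)ᶜ)ᶜ with hWdef
    have hWopen : ∀ p, IsOpen (W p) :=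
      fun p => (hclosed _ (hUopen _ (hU p)).isClosed_compl).isOpen_compl
    have hWmem : ∀ p, p ∈ W p := by
      intro p hp
      obtain ⟨z, hz, hzp⟩ := hp
      exact hz (hUfib p (by simp [hzp]))
    have hWpre : ∀ p, f ⁻¹' (W p) ⊆ U p := by
      intro p x hx
      by_contra hxU
      exact hx ⟨x, hxU, rfl⟩
    obtain ⟨𝒱', hVopen, hVcov, hVref, hVord⟩ := hP (Set.range W)
      (fun V ⟨p, hp⟩ => hp ▸ hWopen p)
      (Set.eq_univ_of_forall fun p => ⟨W p, ⟨p, rfl⟩, hWmem p⟩)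
    refine ⟨(fun V => f ⁻¹' V) '' 𝒱', ?_, ?_, ?_, ?_⟩
    · rintro _ ⟨V, hV, rfl⟩
      exact (hVopen V hV).preimage hf
    · apply Set.eq_univ_of_forall
      intro x
      have : f x ∈ ⋃₀ 𝒱' := hVcov ▸ Set.mem_univ _
      obtain ⟨V, hV, hxV⟩ := this
      exact ⟨f ⁻¹' V, ⟨V, hV, rfl⟩, hxV⟩
    · rintro _ ⟨V, hV, rfl⟩
      obtain ⟨_, ⟨p, rfl⟩, hsub⟩ := hVref V hV
      exact ⟨U p, hU p, (Set.preimage_mono hsub).trans (hWpre p)⟩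
    · intro x
      obtain ⟨hfin, hcard⟩ := hVord (f x)
      have hsub : {V ∈ (fun V => f ⁻¹' V) '' 𝒱' | x ∈ V} ⊆
          (fun V => f ⁻¹' V) '' {V ∈ 𝒱' | f x ∈ V} := by
        rintro _ ⟨⟨V, hV, rfl⟩, hx⟩
        exact ⟨V, ⟨hV, hx⟩, rfl⟩
      refine ⟨(hfin.image _).subset hsub, ?_⟩
      calc {V ∈ (fun V => f ⁻¹' V) '' 𝒱' | x ∈ V}.ncard
          ≤ ((fun V => f ⁻¹' V) '' {V ∈ 𝒱' | f x ∈ V}).ncard :=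
            Set.ncard_le_ncard hsub (hfin.image _)
        _ ≤ {V ∈ 𝒱' | f x ∈ V}.ncard := Set.ncard_image_le hfin
        _ ≤ N + 1 := hcard

/-- `Widim_ε(X,d) ≤ dim X`, and (since `Widim_ε` is antitone in `ε`) the limit as
`ε → 0` is the supremum over `ε > 0`, which equals `dim X` for any compatible metric `d`
(in particular the limit is independent of the choice of `d`). -/
theorem stmt15 (X : Type) [TopologicalSpace X] [CompactSpace X]
    [TopologicalSpace.MetrizableSpace X]
    (d : X → X → ℝ) (hd : IsCompatMetric X d) :
    (∀ ε : ℝ, 0 < ε → widim X d ε ≤ covDim X) ∧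
    (⨆ (ε : ℝ) (_ : 0 < ε), widim X d ε) = covDim X := by
  obtain ⟨m, hm, hdist⟩ := id hd
  have part1 : ∀ ε : ℝ, 0 < ε → widim X d ε ≤ covDim X := by
    intro ε hε
    apply sInf_le
    refine ⟨X, ‹_›, ‹_›, ‹_›, id, continuous_id, fun x y hxy => ?_, rfl⟩
    have : d x y = 0 := by
      rw [← hdist]
      simp [show x = y from hxy]
    linarith
  refine ⟨part1, le_antisymm (iSup₂_le fun ε hε => part1 ε hε) ?_⟩
  rcases eq_or_ne (⨆ (ε : ℝ) (_ : 0 < ε), widim X d ε) ⊤ with h | h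
  · rw [h]; exact le_top
  · obtain ⟨N, hN⟩ : ∃ N : ℕ, (⨆ (ε : ℝ) (_ : 0 < ε), widim X d ε) = (N : ℕ∞) :=
      ⟨(⨆ (ε : ℝ) (_ : 0 < ε), widim X d ε).toNat, (ENat.coe_toNat h).symm⟩
    have hw : ∀ ε : ℝ, 0 < ε → widim X d ε ≤ (N : ℕ∞) := by
      intro ε hε
      rw [← hN]
      exact le_iSup₂ (f := fun (ε : ℝ) (_ : 0 < ε) => widim X d ε) ε hε
    rw [hN]
    have hdim : dimLE X N := by
      apply dimLE_of_fine_embeddings d hd N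
      intro ε hε
      obtain ⟨a, ⟨P, tP, cP, mP, f, hf, hfib, hcov⟩, hle⟩ := exists_le_of_sInf_le (hw ε hε)
      exact ⟨P, tP, cP, mP, f, hf, hfib, dimLE_of_covDim_le (hcov ▸ hle)⟩
    exact sInf_le ⟨N, hdim, rfl⟩
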